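/- Spherical (trigonometric) intertwining: for integer k ≥ 1 and n ≥ 2, the operator Γ_k = ∂_r + (n+k−2) cot(r) satisfies Γ_k ∘ D_{k,r} = D_{k−1,r} ∘ Γ_k on smooth functions of r ∈ (0,π), where D_{m,r} = ∂_r² + (n−1)cot(r) ∂_r − m(m+n−2)/sin²(r). -/

import Mathlib

/-- `Γ_k = ∂_r + (n+k−2) cot(r)`. -/
noncomputable def GamS (n k : ℕ) (g : ℝ → ℝ) : ℝ → ℝ :=
  fun r => deriv g r + ((n : ℝ) + k - 2) * (Real.cos r / Real.sin r) * g r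

/-- `D_{m,r} = ∂_r² + (n−1)cot(r)∂_r − m(m+n−2)/sin²(r)`. -/
noncomputable def DopS (n m : ℕ) (g : ℝ → ℝ) : ℝ → ℝ :=
  fun r => deriv (deriv g) r + ((n : ℝ) - 1) * (Real.cos r / Real.sin r) * deriv g r
    - ((m : ℝ) * ((m : ℝ) + n - 2) / (Real.sin r) ^ 2) * g r

private lemma hasDerivAt_cot (x : ℝ) (hx : Real.sin x ≠ 0) :
    HasDerivAt (fun y => Real.cos y / Real.sin y) (-(1 / Real.sin x ^ 2)) x := by
  have h := (Real.hasDerivAt_cos x).div (Real.hasDerivAt_sin x) hx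
  refine h.congr_deriv ?_
  have h2 := Real.sin_sq_add_cos_sq x
  field_simp
  linarith

private lemma hasDerivAt_csc2 (a : ℝ) (x : ℝ) (hx : Real.sin x ≠ 0) :
    HasDerivAt (fun y => a / Real.sin y ^ 2) (-(2 * a * Real.cos x / Real.sin x ^ 3)) x := by
  have h := (hasDerivAt_const x a).div ((Real.hasDerivAt_sin x).pow 2) (pow_ne_zero 2 hx)
  refine h.congr_deriv ?_
  simp only [Pi.pow_apply]
  field_simp
  ring

/-- Spherical (trigonometric) one-step intertwining: `Γ_k ∘ D_{k,r} = D_{k−1,r} ∘ Γ_k`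
on smooth functions on `(0,π)`. -/
theorem spherical_intertwining_step (n k : ℕ) (hn : 2 ≤ n) (hk : 1 ≤ k)
    (g : ℝ → ℝ) (hg : ContDiffOn ℝ (⊤ : ℕ∞) g (Set.Ioo 0 Real.pi)) :
    ∀ r ∈ Set.Ioo (0 : ℝ) Real.pi,
      GamS n k (DopS n k g) r = DopS n (k - 1) (GamS n k g) r := by
  intro r hr
  have hO : IsOpen (Set.Ioo (0:ℝ) Real.pi) := isOpen_Ioo
  have hsin : ∀ x ∈ Set.Ioo (0:ℝ) Real.pi, Real.sin x ≠ 0 := fun x hx =>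
    ne_of_gt (Real.sin_pos_of_pos_of_lt_pi hx.1 hx.2)
  have hs := hsin r hr
  have hg1 : ContDiffOn ℝ (⊤ : ℕ∞) (deriv g) (Set.Ioo 0 Real.pi) := hg.deriv_of_isOpen hO (by simp)
  have hg2 : ContDiffOn ℝ (⊤ : ℕ∞) (deriv (deriv g)) (Set.Ioo 0 Real.pi) :=
    hg1.deriv_of_isOpen hO (by simp)
  have hd : ∀ (f : ℝ → ℝ), ContDiffOn ℝ (⊤ : ℕ∞) f (Set.Ioo 0 Real.pi) →
      ∀ x ∈ Set.Ioo (0:ℝ) Real.pi, HasDerivAt f (deriv f x) x := fun f hf x hx =>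
    ((hf.differentiableOn (by simp)).differentiableAt (hO.mem_nhds hx)).hasDerivAt
  have hd0 := hd g hg
  have hd1 := hd (deriv g) hg1
  have hd2 := hd (deriv (deriv g)) hg2
  -- derivative of `DopS n k g` at r
  have hDop : HasDerivAt (DopS n k g)
      (deriv (deriv (deriv g)) r
        + (((n:ℝ)-1) * -(1 / Real.sin r ^ 2) * deriv g r
            + ((n:ℝ)-1) * (Real.cos r / Real.sin r) * deriv (deriv g) r)
        - (-(2 * ((k:ℝ) * ((k:ℝ) + n - 2)) * Real.cos r / Real.sin r ^ 3) * g r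
            + ((k:ℝ) * ((k:ℝ) + n - 2) / Real.sin r ^ 2) * deriv g r)) r :=
    ((hd2 r hr).add
        (((hasDerivAt_cot r hs).const_mul ((n:ℝ)-1)).mul (hd1 r hr))).sub
      ((hasDerivAt_csc2 ((k:ℝ) * ((k:ℝ) + n - 2)) r hs).mul (hd0 r hr))
  -- derivative of `GamS n k g` on the interval
  have hGam : ∀ x ∈ Set.Ioo (0:ℝ) Real.pi, HasDerivAt (GamS n k g)
      (deriv (deriv g) x + (((n:ℝ) + k - 2) * -(1 / Real.sin x ^ 2) * g x
        + ((n:ℝ) + k - 2) * (Real.cos x / Real.sin x) * deriv g x)) x := fun x hx =>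
    (hd1 x hx).add
      (((hasDerivAt_cot x (hsin x hx)).const_mul ((n:ℝ) + k - 2)).mul (hd0 x hx))
  -- second derivative of `GamS n k g` at r
  have hEq : deriv (GamS n k g) =ᶠ[nhds r]
      (fun x => deriv (deriv g) x + (((n:ℝ) + k - 2) * -(1 / Real.sin x ^ 2) * g x
        + ((n:ℝ) + k - 2) * (Real.cos x / Real.sin x) * deriv g x)) := by
    filter_upwards [hO.mem_nhds hr] with x hx using (hGam x hx).deriv
  have hGp : HasDerivAt (fun x => deriv (deriv g) x
      + (((n:ℝ) + k - 2) * -(1 / Real.sin x ^ 2) * g x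
        + ((n:ℝ) + k - 2) * (Real.cos x / Real.sin x) * deriv g x))
      (deriv (deriv (deriv g)) r
        + ((((n:ℝ) + k - 2) * -(-(2 * 1 * Real.cos r / Real.sin r ^ 3))) * g r
            + (((n:ℝ) + k - 2) * -(1 / Real.sin r ^ 2)) * deriv g r
          + ((((n:ℝ) + k - 2) * -(1 / Real.sin r ^ 2)) * deriv g r
            + (((n:ℝ) + k - 2) * (Real.cos r / Real.sin r)) * deriv (deriv g) r))) r :=
    (hd2 r hr).add
      (((((hasDerivAt_csc2 1 r hs).neg).const_mul ((n:ℝ) + k - 2)).mul (hd0 r hr)).add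
        (((hasDerivAt_cot r hs).const_mul ((n:ℝ) + k - 2)).mul (hd1 r hr)))
  have e1 := hDop.deriv
  have e2 := (hGam r hr).deriv
  have e3 := hEq.deriv_eq.trans hGp.deriv
  rw [show GamS n k (DopS n k g) r = deriv (DopS n k g) r
        + ((n:ℝ) + k - 2) * (Real.cos r / Real.sin r) * (DopS n k g r) from rfl,
      show DopS n (k-1) (GamS n k g) r = deriv (deriv (GamS n k g)) r
        + ((n:ℝ) - 1) * (Real.cos r / Real.sin r) * deriv (GamS n k g) r
        - (((k-1 : ℕ):ℝ) * (((k-1 : ℕ):ℝ) + n - 2) / Real.sin r ^ 2) * (GamS n k g r) from rfl,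
      e1, e2, e3]
  simp only [DopS, GamS]
  rw [Nat.cast_sub hk]
  push_cast
  field_simp
  ring
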